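/- arXiv:1501.04663 — 3 statements merged into one kernel-verified Lean document; each statement's English description precedes it below -/
import Mathlib

section
/- (PBH test, sufficiency direction) If for every eigenvalue λ of A, every nonzero left eigenvector q with qᵀA = λqᵀ satisfies qᵀB ≠ 0, then the controllability matrix [B, AB, ..., A^{n-1}B] has rank n. -/
/-!
If the controllability matrix had rank `< n`, some row vector `q ≠ 0` would annihilate
`A ^ k * B` for `k < n`, hence by Cayley–Hamilton for every `k`. The row vectors annihilating
all `A ^ k * B` form a nonzero subspace that is invariant under `x ↦ x A`, so over `ℂ` it
contains a left eigenvector of `A`; that eigenvector annihilates `B = A ^ 0 * B`, against the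
hypothesis.
-/

open Matrix

/-- The controllability matrix `[B, AB, ..., A^{n-1}B]` of the pair `(A, B)`. -/
noncomputable def ctrbMatrix {n m : ℕ} (A : Matrix (Fin n) (Fin n) ℂ) (B : Matrix (Fin n) (Fin m) ℂ) :
    Matrix (Fin n) (Fin n × Fin m) ℂ :=
  fun i p => (A ^ (p.1 : ℕ) * B) i p.2

theorem Module.End.exists_hasEigenvector_mem {K V : Type*} [Field K] [IsAlgClosed K]
    [AddCommGroup V] [Module K V] [FiniteDimensional K V] (f : Module.End K V)
    {p : Submodule K V} (hp : p ≠ ⊥) (hfp : ∀ x ∈ p, f x ∈ p) :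
    ∃ μ, ∃ v ∈ p, f.HasEigenvector μ v := by
  have : Nontrivial p := Submodule.nontrivial_iff_ne_bot.2 hp
  obtain ⟨μ, hμ⟩ := Module.End.exists_eigenvalue (f.restrict hfp)
  obtain ⟨v, hv⟩ := hμ.exists_hasEigenvector
  refine ⟨μ, v, v.2, ?_, fun h => hv.2 (Subtype.ext h)⟩
  rw [Module.End.mem_eigenspace_iff]
  simpa [LinearMap.restrict_apply] using congrArg Subtype.val hv.apply_eq_smul

namespace Matrix

theorem rank_eq_card_of_vecMul_eq_zero {ι κ K : Type*} [Fintype ι] [Fintype κ] [Field K]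
    (M : Matrix ι κ K) (h : ∀ q : ι → K, q ᵥ* M = 0 → q = 0) : M.rank = Fintype.card ι :=
  (vecMul_injective_iff.1 <| (injective_iff_map_eq_zero M.vecMulLinear).2 h).rank_matrix

variable {ι κ R : Type*} [Fintype ι] [DecidableEq ι] [CommRing R]

open Polynomial in
/-- Cayley–Hamilton: `A ^ k = aeval A (X ^ k %ₘ A.charpoly)`, a polynomial in `A` of degree
`< card ι`. -/
theorem pow_mem_span_pow_lt_card [Nontrivial R] (A : Matrix ι ι R) (k : ℕ) :
    A ^ k ∈ Submodule.span R ((fun i => A ^ i) '' Set.Iio (Fintype.card ι)) := by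
  classical
  have hmod : X ^ k %ₘ A.charpoly ∈ R[X]_(Fintype.card ι) := by
    rw [mem_degreeLT, ← A.charpoly_degree_eq_dim]
    exact degree_modByMonic_lt _ A.charpoly_monic
  have := Submodule.mem_map_of_mem (f := (aeval A).toLinearMap) hmod
  rw [degreeLT_eq_span_X_pow, Submodule.map_span, Finset.coe_image, Set.image_image] at this
  simpa [← pow_eq_aeval_mod_charpoly] using this

def ctrbLeftKer (A : Matrix ι ι R) (B : Matrix ι κ R) : Submodule R (ι → R) :=
  ⨅ k : ℕ, LinearMap.ker (A ^ k * B).vecMulLinear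

variable {A : Matrix ι ι R} {B : Matrix ι κ R} {q : ι → R}

theorem mem_ctrbLeftKer : q ∈ ctrbLeftKer A B ↔ ∀ k : ℕ, q ᵥ* (A ^ k * B) = 0 := by
  simp [ctrbLeftKer]

theorem vecMul_mem_ctrbLeftKer (hq : q ∈ ctrbLeftKer A B) : q ᵥ* A ∈ ctrbLeftKer A B := by
  rw [mem_ctrbLeftKer] at hq ⊢
  intro k
  rw [vecMul_vecMul, ← Matrix.mul_assoc, ← pow_succ']
  exact hq (k + 1)

theorem mem_ctrbLeftKer_of_lt_card [Nontrivial R]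
    (hq : ∀ k < Fintype.card ι, q ᵥ* (A ^ k * B) = 0) : q ∈ ctrbLeftKer A B := by
  refine mem_ctrbLeftKer.2 fun k => ?_
  refine Submodule.span_induction (p := fun M _ => q ᵥ* (M * B) = 0) ?_ (by simp) ?_ ?_
    (A.pow_mem_span_pow_lt_card k)
  · rintro _ ⟨i, hi, rfl⟩
    exact hq i hi
  · intro M N _ _ hM hN
    rw [Matrix.add_mul, vecMul_add, hM, hN, add_zero]
  · intro c M _ hM
    rw [Matrix.smul_mul, vecMul_smul, hM, smul_zero]

end Matrix

theorem pbh_sufficiency {n m : ℕ}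
    (A : Matrix (Fin n) (Fin n) ℂ) (B : Matrix (Fin n) (Fin m) ℂ)
    (hpbh : ∀ (q : Fin n → ℂ) (lam : ℂ),
      q ≠ 0 → Matrix.vecMul q A = lam • q → Matrix.vecMul q B ≠ 0) :
    (ctrbMatrix A B).rank = n := by
  refine (rank_eq_card_of_vecMul_eq_zero _ fun q hq => ?_).trans (Fintype.card_fin n)
  have hqW : q ∈ ctrbLeftKer A B := mem_ctrbLeftKer_of_lt_card fun k hk =>
    funext fun j => congrFun hq (⟨k, by simpa using hk⟩, j)
  by_contra hq0
  obtain ⟨lam, v, hvW, hv⟩ := Module.End.exists_hasEigenvector_mem A.vecMulLinear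
    ((Submodule.ne_bot_iff _).2 ⟨q, hqW, hq0⟩) fun _ => vecMul_mem_ctrbLeftKer
  exact hpbh v lam hv.2 hv.apply_eq_smul (by simpa using mem_ctrbLeftKer.1 hvW 0)
end

section
/- If q is a (possibly complex) row vector satisfying qᵀ A^{m-1}(A - BC) = λ qᵀ and qᵀ A^r B = 0 for all 0 ≤ r ≤ m−2, then qᵀ (A - BC)^m = λ qᵀ. Hence if λ_m is an m-th root of λ and qᵀ(A-BC) = λ_m qᵀ holds for some such root, together with qᵀB = 0, the pair (A - BC, B) fails the PBH controllability test at λ_m. -/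
/-!
Feedback `A ↦ A - B * C` only changes a row vector `v` acting on the right through `v * B`.
So as long as the rows `qᵀ A^r` are orthogonal to `B`, the powers of `A - B * C` and of `A`
move `q` in the same way; after `m - 1` steps one more application of `A - B * C` gives the
eigen-relation. The PBH part is immediate: `q` itself is a left eigenvector of `A - B * C`
annihilating `B`.
-/

open Matrix

section Feedback

variable {R ι κ : Type*} [Ring R] [Fintype ι] [Fintype κ]
  {A : Matrix ι ι R} {B : Matrix ι κ R} {C : Matrix κ ι R}

theorem vecMul_sub_mul_of_vecMul_eq_zero {v : ι → R} (hv : v ᵥ* B = 0) :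
    v ᵥ* (A - B * C) = v ᵥ* A := by
  rw [vecMul_sub, ← vecMul_vecMul, hv, zero_vecMul, sub_zero]

theorem vecMul_sub_mul_pow_eq_vecMul_pow [DecidableEq ι] {q : ι → R} {k : ℕ}
    (horth : ∀ r < k, q ᵥ* (A ^ r * B) = 0) :
    q ᵥ* ((A - B * C) ^ k) = q ᵥ* (A ^ k) := by
  induction k with
  | zero => rfl
  | succ k ih =>
    have hk : q ᵥ* (A ^ k) ᵥ* B = 0 := by
      rw [vecMul_vecMul]
      exact horth k k.lt_succ_self
    rw [pow_succ, pow_succ, ← vecMul_vecMul, ← vecMul_vecMul,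
      ih fun r hr => horth r (hr.trans k.lt_succ_self), vecMul_sub_mul_of_vecMul_eq_zero hk]

end Feedback

theorem left_eigvec_pullback_pbh {n p : ℕ} {m : ℕ} (hm : 1 ≤ m)
    (A : Matrix (Fin n) (Fin n) ℂ) (B : Matrix (Fin n) (Fin p) ℂ)
    (C : Matrix (Fin p) (Fin n) ℂ) (q : Fin n → ℂ) (lam : ℂ)
    (heig : Matrix.vecMul q (A ^ (m - 1) * (A - B * C)) = lam • q)
    (horth : ∀ r : ℕ, r + 2 ≤ m → Matrix.vecMul q (A ^ r * B) = 0) :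
    Matrix.vecMul q ((A - B * C) ^ m) = lam • q ∧
    (∀ lamm : ℂ, lamm ^ m = lam → q ≠ 0 →
      Matrix.vecMul q (A - B * C) = lamm • q → Matrix.vecMul q B = 0 →
      ¬ (∀ (p' : Fin n → ℂ) (μ : ℂ), p' ≠ 0 →
          Matrix.vecMul p' (A - B * C) = μ • p' → Matrix.vecMul p' B ≠ 0)) := by
  refine ⟨?_, fun lamm _ hq heigm hqB hpbh => hpbh q lamm hq heigm hqB⟩
  have hpow : q ᵥ* ((A - B * C) ^ (m - 1)) = q ᵥ* (A ^ (m - 1)) :=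
    vecMul_sub_mul_pow_eq_vecMul_pow fun r hr => horth r (by omega)
  obtain ⟨k, rfl⟩ := Nat.exists_eq_add_of_le' hm
  rw [Nat.add_sub_cancel] at hpow heig
  rw [pow_succ, ← vecMul_vecMul, hpow, vecMul_vecMul, heig]
end

section
/- The Geweke measures are invariant under invertible linear scaling: if T_X and T_Y are invertible matrices and we replace Ω_X by T_X Ω_X T_Xᵀ, Σ_X by T_X Σ_X T_Xᵀ, Ω_Y by T_Y Ω_Y T_Yᵀ, Σ_Y by T_Y Σ_Y T_Yᵀ, and Σ by diag(T_X, T_Y) Σ diag(T_X, T_Y)ᵀ, then F_{Y→X}, F_{X→Y}, F_{Y·X}, and F_{X∘Y} are unchanged. -/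
/-! Replacing a covariance matrix `M` by `P * M * Pᵀ` multiplies its determinant by `(det P)²`.
Each Geweke measure is the logarithm of a ratio in which this factor occurs equally often in the
numerator and the denominator (for the joint matrix, `det T = det T_X * det T_Y`), so the ratio,
and hence its logarithm, is unchanged. -/

open Matrix

namespace Matrix

variable {ι α β K : Type*} [Fintype ι] [DecidableEq ι]

theorem det_mul_mul_transpose [CommRing K] (P M : Matrix ι ι K) :
    (P * M * Pᵀ).det = P.det ^ 2 * M.det := by
  rw [det_mul, det_mul, det_transpose]
  ring

theorem det_mul_mul_transpose_div [Field K] {P : Matrix ι ι K} (hP : P.det ≠ 0)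
    (A B : Matrix ι ι K) : (P * A * Pᵀ).det / (P * B * Pᵀ).det = A.det / B.det := by
  rw [det_mul_mul_transpose, det_mul_mul_transpose, mul_div_mul_left _ _ (pow_ne_zero 2 hP)]

theorem det_mul_det_div_det_blockDiagonal_mul_mul_transpose [Field K]
    [Fintype α] [DecidableEq α] [Fintype β] [DecidableEq β] (e : α ⊕ β ≃ ι)
    {P : Matrix α α K} {Q : Matrix β β K} (hP : P.det ≠ 0) (hQ : Q.det ≠ 0)
    (A : Matrix α α K) (B : Matrix β β K) (C : Matrix ι ι K) :
    let R := reindex e e (fromBlocks P 0 0 Q)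
    (P * A * Pᵀ).det * (Q * B * Qᵀ).det / (R * C * Rᵀ).det = A.det * B.det / C.det := by
  intro R
  have hR : R.det = P.det * Q.det := by
    simp only [R, det_reindex_self, det_fromBlocks_zero₁₂]
  rw [det_mul_mul_transpose, det_mul_mul_transpose, det_mul_mul_transpose, hR,
    show P.det ^ 2 * A.det * (Q.det ^ 2 * B.det) = (P.det * Q.det) ^ 2 * (A.det * B.det) by ring,
    mul_div_mul_left _ _ (pow_ne_zero 2 (mul_ne_zero hP hQ))]

end Matrix

theorem geweke_measures_scale_invariant_general {n m : ℕ}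
    (OmX SX : Matrix (Fin n) (Fin n) ℝ) (OmY SY : Matrix (Fin m) (Fin m) ℝ)
    (SXY : Matrix (Fin n) (Fin m) ℝ)
    (TX : Matrix (Fin n) (Fin n) ℝ) (TY : Matrix (Fin m) (Fin m) ℝ)
    (hTX : IsUnit TX.det) (hTY : IsUnit TY.det) :
    let S : Matrix (Fin (n + m)) (Fin (n + m)) ℝ :=
      (Matrix.reindex finSumFinEquiv finSumFinEquiv) (Matrix.fromBlocks SX SXY SXYᵀ SY)
    let T : Matrix (Fin (n + m)) (Fin (n + m)) ℝ :=
      (Matrix.reindex finSumFinEquiv finSumFinEquiv) (Matrix.fromBlocks TX 0 0 TY)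
    (Real.log ((TX * OmX * TXᵀ).det / (TX * SX * TXᵀ).det) = Real.log (OmX.det / SX.det)) ∧
    (Real.log ((TY * OmY * TYᵀ).det / (TY * SY * TYᵀ).det) = Real.log (OmY.det / SY.det)) ∧
    (Real.log ((TX * SX * TXᵀ).det * (TY * SY * TYᵀ).det / (T * S * Tᵀ).det) =
      Real.log (SX.det * SY.det / S.det)) ∧
    (Real.log ((TX * OmX * TXᵀ).det * (TY * OmY * TYᵀ).det / (T * S * Tᵀ).det) =
      Real.log (OmX.det * OmY.det / S.det)) := by
  intro S T
  have hX := hTX.ne_zero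
  have hY := hTY.ne_zero
  refine ⟨congrArg Real.log (det_mul_mul_transpose_div hX _ _),
    congrArg Real.log (det_mul_mul_transpose_div hY _ _),
    congrArg Real.log ?_, congrArg Real.log ?_⟩ <;>
  exact det_mul_det_div_det_blockDiagonal_mul_mul_transpose finSumFinEquiv hX hY _ _ _

theorem geweke_measures_scale_invariant {n m : ℕ}
    (OmX SX : Matrix (Fin n) (Fin n) ℝ) (OmY SY : Matrix (Fin m) (Fin m) ℝ)
    (SXY : Matrix (Fin n) (Fin m) ℝ)
    (hOmX : OmX.PosDef) (hOmY : OmY.PosDef)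
    (hS : (Matrix.fromBlocks SX SXY SXYᵀ SY).PosDef)
    (TX : Matrix (Fin n) (Fin n) ℝ) (TY : Matrix (Fin m) (Fin m) ℝ)
    (hTX : IsUnit TX.det) (hTY : IsUnit TY.det) :
    let S : Matrix (Fin (n + m)) (Fin (n + m)) ℝ :=
      (Matrix.reindex finSumFinEquiv finSumFinEquiv) (Matrix.fromBlocks SX SXY SXYᵀ SY)
    let T : Matrix (Fin (n + m)) (Fin (n + m)) ℝ :=
      (Matrix.reindex finSumFinEquiv finSumFinEquiv) (Matrix.fromBlocks TX 0 0 TY)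
    (Real.log ((TX * OmX * TXᵀ).det / (TX * SX * TXᵀ).det) = Real.log (OmX.det / SX.det)) ∧
    (Real.log ((TY * OmY * TYᵀ).det / (TY * SY * TYᵀ).det) = Real.log (OmY.det / SY.det)) ∧
    (Real.log ((TX * SX * TXᵀ).det * (TY * SY * TYᵀ).det / (T * S * Tᵀ).det) =
      Real.log (SX.det * SY.det / S.det)) ∧
    (Real.log ((TX * OmX * TXᵀ).det * (TY * OmY * TYᵀ).det / (T * S * Tᵀ).det) =
      Real.log (OmX.det * OmY.det / S.det)) :=
  geweke_measures_scale_invariant_general OmX SX OmY SY SXY TX TY hTX hTY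
end
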